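/- arXiv:1807.08181 — 3 statements merged into one kernel-verified Lean document; each statement's English description precedes it below -/
import Mathlib

section
/- For nonnegative integers n, k with k ≤ n and a positive integer t, the number of strictly increasing k-tuples (T_1,...,T_k) of integers from {1,...,n} such that T_{t-1+j} ≥ t-1+2j for every j with 1 ≤ j ≤ k-t+1 (a vacuous condition if k ≤ t-1) equals the number of NE-paths from (0,0) to (k, n-k) that never touch the line y = x - t. -/
/-!
Encode a tableau `T` by the path whose `i`-th step is east exactly when `i` is an entry of `T`:
after `i` steps the path is at `(c i, i - c i)` with `c i = #{m | T m ≤ i}`, and this is a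
bijection onto NE-paths from the origin. The path touches `y = x - t` iff `2 c i = i + t` for
some `i`. If `T_{t-1+j} ≤ t + 2j - 2`, then `2 c i - i - t`, which starts at `-t` and moves by
`±1`, is nonnegative at `i = t + 2j - 2`, so it vanishes somewhere; conversely a zero at `i`
with `m = c i` gives `T_m ≤ i < 2m - t + 1`, violating the bound for `j = m - t + 1`.
-/

open Finset

namespace ColumnarTableau

section CountLE

variable {k : ℕ} {T : Fin k → ℕ}

def countLE (T : Fin k → ℕ) (i : ℕ) : ℕ := #{m | T m ≤ i}

lemma countLE_le_card (T : Fin k → ℕ) (i : ℕ) : countLE T i ≤ k := by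
  simpa [countLE] using card_filter_le univ (T · ≤ i)

lemma countLE_mono (T : Fin k → ℕ) : Monotone (countLE T) := fun _ _ h =>
  card_le_card (monotone_filter_right _ fun _ _ hm => le_trans hm h)

lemma countLE_zero (hT : ∀ m, 1 ≤ T m) : countLE T 0 = 0 := by
  simp only [countLE, card_eq_zero, filter_eq_empty_iff]
  exact fun m _ => Nat.not_le.2 (hT m)

lemma countLE_of_forall_le {n : ℕ} (hT : ∀ m, T m ≤ n) : countLE T n = k := by
  simp [countLE, hT]

lemma countLE_succ_le (hT : Function.Injective T) (i : ℕ) :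
    countLE T (i + 1) ≤ countLE T i + 1 := by
  have hsub : ({m | T m ≤ i + 1} : Finset (Fin k)) ⊆
      ({m | T m ≤ i} : Finset (Fin k)) ∪ ({m | T m = i + 1} : Finset (Fin k)) := by
    intro m; simp only [mem_union, mem_filter, mem_univ, true_and]; omega
  have hone : #({m | T m = i + 1} : Finset (Fin k)) ≤ 1 :=
    card_le_one.2 fun a ha b hb => hT (by simp_all)
  exact (card_le_card hsub).trans ((card_union_le _ _).trans (by unfold countLE; omega))

lemma countLE_le_self (hT : Function.Injective T) (h1 : ∀ m, 1 ≤ T m) (i : ℕ) :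
    countLE T i ≤ i := by
  simpa [countLE] using card_le_card_of_injOn T (t := Icc 1 i)
    (fun m hm => by simp_all) hT.injOn

lemma le_iff_lt_countLE (hT : StrictMono T) (m : Fin k) (i : ℕ) :
    T m ≤ i ↔ (m : ℕ) < countLE T i := by
  constructor
  · intro h
    have : Iic m ⊆ ({m' | T m' ≤ i} : Finset (Fin k)) := fun m' hm' => by
      simp only [mem_Iic] at hm'
      simpa using (hT.monotone hm').trans h
    simpa [countLE] using card_le_card this
  · intro h
    by_contra! hlt
    have : ({m' | T m' ≤ i} : Finset (Fin k)) ⊆ Iio m := fun m' hm' => by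
      simp only [mem_filter, mem_univ, true_and] at hm'
      simpa using hT.lt_iff_lt.1 (hm'.trans_lt hlt)
    have := card_le_card this
    simp only [Fin.card_Iio] at this
    exact absurd h (by unfold countLE; omega)

lemma eq_of_countLE_eq {n : ℕ} {T₁ T₂ : Fin k → ℕ} (hT₁ : StrictMono T₁) (hT₂ : StrictMono T₂)
    (hn₁ : ∀ m, T₁ m ≤ n) (hn₂ : ∀ m, T₂ m ≤ n) (h : ∀ i ≤ n, countLE T₁ i = countLE T₂ i) :
    T₁ = T₂ := by
  funext m
  apply le_antisymm
  · rw [le_iff_lt_countLE hT₁, h _ (hn₂ m), ← le_iff_lt_countLE hT₂]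
  · rw [le_iff_lt_countLE hT₂, ← h _ (hn₁ m), ← le_iff_lt_countLE hT₁]

end CountLE

lemma exists_eq_of_succ_le_add_one {g : ℕ → ℤ} (hg : ∀ i, g (i + 1) ≤ g i + 1) {v : ℤ}
    {N : ℕ} (h0 : g 0 ≤ v) (hN : v ≤ g N) : ∃ i ≤ N, g i = v := by
  induction N with
  | zero => exact ⟨0, le_rfl, le_antisymm h0 hN⟩
  | succ N ih =>
    by_cases h : v ≤ g N
    · obtain ⟨i, hi, hgi⟩ := ih h
      exact ⟨i, by omega, hgi⟩
    · exact ⟨N + 1, le_rfl, by linarith [hg N]⟩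

lemma exists_countLE_eq {n k : ℕ} {c : ℕ → ℕ} (hc0 : c 0 = 0) (hmono : Monotone c)
    (hstep : ∀ i, c (i + 1) ≤ c i + 1) (hn : c n = k) :
    ∃ T : Fin k → ℕ, StrictMono T ∧ (∀ m, 1 ≤ T m ∧ T m ≤ n) ∧ ∀ i ≤ n, countLE T i = c i := by
  have hivt : ∀ {v N : ℕ}, v ≤ c N → ∃ i ≤ N, c i = v := fun {v N} hv => by
    obtain ⟨i, hi, hci⟩ := exists_eq_of_succ_le_add_one (g := fun i => (c i : ℤ)) (v := v)
      (by exact_mod_cast hstep) (by simp [hc0]) (by exact_mod_cast hv)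
    exact ⟨i, hi, by exact_mod_cast hci⟩
  have hex : ∀ m : Fin k, ∃ i, c i = m + 1 := fun m =>
    (hivt (N := n) (by omega)).imp fun _ h => h.2
  classical
  let T : Fin k → ℕ := fun m => Nat.find (hex m)
  have hT : ∀ m i, T m ≤ i ↔ (m : ℕ) < c i := fun m i => by
    refine ⟨fun h => ?_, fun h => ?_⟩
    · have := hmono h
      have : c (T m) = m + 1 := Nat.find_spec (hex m)
      omega
    · obtain ⟨i', hi', hci'⟩ := hivt (v := m + 1) (N := i) h
      exact (Nat.find_min' (hex m) hci').trans hi'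
  refine ⟨T, fun m₁ m₂ h => ?_, fun m => ⟨?_, ?_⟩, fun i hi => ?_⟩
  · by_contra! hle
    have h₂ := (hT m₂ _).1 hle
    have h₁ : c (T m₁) = m₁ + 1 := Nat.find_spec (hex m₁)
    have := Fin.lt_def.1 h
    omega
  · by_contra! h0
    have := (hT m 0).1 (by omega)
    omega
  · exact (hT m n).2 (by omega)
  · have := hmono hi
    simp only [countLE, hT, Fin.card_filter_val_lt]
    omega

lemma admissible_iff {n k t : ℕ} (ht : 0 < t) {T : Fin k → ℕ} (hT : StrictMono T)
    (hb : ∀ m, 1 ≤ T m ∧ T m ≤ n) :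
    (∀ j : ℕ, ∀ _ : 1 ≤ j, ∀ _ : j + t ≤ k + 1, t - 1 + 2 * j ≤ T ⟨t + j - 2, by omega⟩) ↔
      ∀ i ≤ n, 2 * countLE T i ≠ i + t := by
  constructor
  · intro hadm i _ heq
    have hi := countLE_le_self hT.injective (fun m => (hb m).1) i
    have hk := countLE_le_card T i
    have hge := hadm (countLE T i - t + 1) (by omega) (by omega)
    have hle :=
      (le_iff_lt_countLE hT ⟨t + (countLE T i - t + 1) - 2, by omega⟩ i).2 (by simp; omega)
    omega
  · intro hne j hj₁ hj₂
    by_contra! hlt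
    have hcount : t + j - 2 < countLE T (t + 2 * j - 2) :=
      (le_iff_lt_countLE hT ⟨t + j - 2, by omega⟩ _).1 (by omega)
    set g : ℕ → ℤ := fun i => 2 * countLE T i - i - t with hg
    have hstep : ∀ i, g (i + 1) ≤ g i + 1 := fun i => by
      have := countLE_succ_le hT.injective i
      simp only [hg]
      push_cast
      omega
    obtain ⟨N, hN, hgN⟩ : ∃ N ≤ n, 0 ≤ g N := by
      rcases le_total (t + 2 * j - 2) n with h | h
      · exact ⟨_, h, by simp only [hg]; omega⟩
      · have := countLE_le_card T (t + 2 * j - 2)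
        have := countLE_of_forall_le fun m => (hb m).2
        exact ⟨n, le_rfl, by simp only [hg]; omega⟩
    obtain ⟨i, hi, hgi⟩ := exists_eq_of_succ_le_add_one hstep (v := 0)
      (by simp [hg, countLE_zero fun m => (hb m).1]) hgN
    exact hne i (by omega) (by simp only [hg] at hgi; omega)

section NEPath

def pathOf (n : ℕ) (c : ℕ → ℕ) : Fin (n + 1) → ℤ × ℤ := fun i => (c i, i - c i)

variable {n : ℕ}

lemma pathOf_eq_pathOf_iff {c₁ c₂ : ℕ → ℕ} :
    pathOf n c₁ = pathOf n c₂ ↔ ∀ i ≤ n, c₁ i = c₂ i := by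
  refine ⟨fun h i hi => ?_, fun h => funext fun i => ?_⟩
  · simpa [pathOf] using congrArg Prod.fst (congrFun h ⟨i, by omega⟩)
  · simp [pathOf, h i (by omega)]

lemma pathOf_succ {c : ℕ → ℕ} (i : Fin n) (h : c (i + 1) = c i + 1 ∨ c (i + 1) = c i) :
    pathOf n c i.succ = pathOf n c i.castSucc + (1, 0) ∨
      pathOf n c i.succ = pathOf n c i.castSucc + (0, 1) := by
  simp only [pathOf, Fin.val_succ, Fin.val_castSucc, Prod.mk_add_mk, Prod.mk.injEq]
  omega

lemma pathOf_avoids_iff {c : ℕ → ℕ} {t : ℕ} (i : Fin (n + 1)) :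
    (pathOf n c i).2 ≠ (pathOf n c i).1 - t ↔ 2 * c i ≠ i + t := by
  simp only [pathOf]
  omega

lemma fst_nonneg_and_fst_add_snd_of_steps {P : Fin (n + 1) → ℤ × ℤ} (h0 : P 0 = (0, 0))
    (hstep : ∀ i : Fin n, P i.succ = P i.castSucc + (1, 0) ∨ P i.succ = P i.castSucc + (0, 1))
    (i : Fin (n + 1)) : 0 ≤ (P i).1 ∧ (P i).1 + (P i).2 = i := by
  induction i using Fin.induction with
  | zero => simp [h0]
  | succ i ih =>
    simp only [Fin.val_succ, Fin.val_castSucc] at ih ⊢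
    rcases hstep i with h | h <;> simp only [h, Prod.fst_add, Prod.snd_add] <;> simp <;> omega

lemma exists_eq_pathOf {P : Fin (n + 1) → ℤ × ℤ} (h0 : P 0 = (0, 0))
    (hstep : ∀ i : Fin n, P i.succ = P i.castSucc + (1, 0) ∨ P i.succ = P i.castSucc + (0, 1)) :
    ∃ c : ℕ → ℕ, c 0 = 0 ∧ Monotone c ∧ (∀ i, c (i + 1) ≤ c i + 1) ∧ P = pathOf n c := by
  set c : ℕ → ℕ := fun i => (P (Fin.clamp i n)).1.toNat with hc
  have hsucc : ∀ i, c i ≤ c (i + 1) ∧ c (i + 1) ≤ c i + 1 := by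
    intro i
    rcases lt_or_ge i n with hi | hi
    · have h₁ : Fin.clamp (i + 1) n = (⟨i, hi⟩ : Fin n).succ :=
        Fin.ext (by simp [Fin.clamp]; omega)
      have h₂ : Fin.clamp i n = (⟨i, hi⟩ : Fin n).castSucc :=
        Fin.ext (by simp [Fin.clamp]; omega)
      rcases hstep ⟨i, hi⟩ with h | h <;> simp only [hc, h₁, h₂, h, Prod.fst_add] <;> simp
    · have h₁ : Fin.clamp (i + 1) n = Fin.clamp i n := Fin.ext (by simp [Fin.clamp]; omega)
      simp [hc, h₁]
  refine ⟨c, by simp [hc, Fin.clamp, h0], monotone_nat_of_le_succ fun i => (hsucc i).1,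
    fun i => (hsucc i).2, funext fun i => ?_⟩
  have := fst_nonneg_and_fst_add_snd_of_steps h0 hstep i
  have hci : Fin.clamp i n = i := Fin.ext (by simp [Fin.clamp]; omega)
  simp only [pathOf, hc, hci, Prod.ext_iff]
  omega

end NEPath

end ColumnarTableau

open ColumnarTableau in
/-- The number of t-admissible (n,k)-columnar tableaux (strictly increasing k-tuples
from {1,…,n} with `T_{t-1+j} ≥ t-1+2j` for `1 ≤ j ≤ k-t+1`, entries indexed 1-based,
so entry `T_{t-1+j}` is `T ⟨t+j-2, _⟩` with 0-based `Fin` indexing) equals the number of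
t-admissible NE-paths from (0,0) to (k, n-k) (paths never touching `y = x - t`). -/
theorem stmt4 (t n k : ℕ) (ht : 0 < t) :
    Nat.card {T : Fin k → ℕ //
        StrictMono T ∧ (∀ i, 1 ≤ T i ∧ T i ≤ n) ∧
        (∀ j : ℕ, ∀ _ : 1 ≤ j, ∀ _ : j + t ≤ k + 1,
          t - 1 + 2 * j ≤ T ⟨t + j - 2, by omega⟩)}
      = Nat.card {P : Fin (n + 1) → ℤ × ℤ //
        P 0 = (0, 0) ∧ P (Fin.last n) = ((k : ℤ), (n : ℤ) - k) ∧
        (∀ i : Fin n, P i.succ = P i.castSucc + (1, 0) ∨ P i.succ = P i.castSucc + (0, 1)) ∧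
        (∀ i : Fin (n + 1), (P i).2 ≠ (P i).1 - t)} := by
  refine Nat.card_eq_of_bijective (fun ⟨T, hT, hb, hadm⟩ => ⟨pathOf n (countLE T),
    by simp [pathOf, countLE_zero fun m => (hb m).1],
    by simp [pathOf, countLE_of_forall_le fun m => (hb m).2],
    fun i => pathOf_succ i (by
      have := countLE_mono T (Nat.le_add_right (i : ℕ) 1)
      have := countLE_succ_le hT.injective i
      omega),
    fun i => (pathOf_avoids_iff i).2 ((admissible_iff ht hT hb).1 hadm i (by omega))⟩) ⟨?_, ?_⟩
  · rintro ⟨T₁, hT₁, hb₁, _⟩ ⟨T₂, hT₂, hb₂, _⟩ h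
    exact Subtype.ext (eq_of_countLE_eq hT₁ hT₂ (fun m => (hb₁ m).2) (fun m => (hb₂ m).2)
      (pathOf_eq_pathOf_iff.1 (congrArg Subtype.val h)))
  · rintro ⟨P, h0, hlast, hstep, havoid⟩
    obtain ⟨c, hc0, hmono, hstep', rfl⟩ := exists_eq_pathOf h0 hstep
    have hcn : c n = k := by simpa [pathOf] using congrArg Prod.fst hlast
    obtain ⟨T, hT, hb, hTc⟩ := exists_countLE_eq hc0 hmono hstep' hcn
    have hadm := (admissible_iff ht hT hb).2 fun i hi => by
      simpa [hTc i hi] using (pathOf_avoids_iff ⟨i, by omega⟩).1 (havoid ⟨i, by omega⟩)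
    exact ⟨⟨T, hT, hb, hadm⟩, Subtype.ext (pathOf_eq_pathOf_iff.2 hTc)⟩
end

section
/- For a nonnegative integer n, the number of integers k with 0 ≤ k ≤ n such that the binomial coefficient C(n,k) is odd equals 2^{d(n)}, where d(n) is the number of ones in the binary representation of n. -/
/-!
By Lucas' theorem at `p = 2`, `C(n, k)` is odd iff the last binary digit of `k` is at most that
of `n` and `C(n / 2, k / 2)` is odd. So the odd entries of row `n` are exactly the `2 j + e` with
`C(n / 2, j)` odd and `e ≤ n % 2`: each binary digit `1` of `n` doubles their number, each `0`
keeps it.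
-/

/-- `d n` is the number of ones in the binary representation of `n`. -/
def dbin (n : ℕ) : ℕ := (Nat.digits 2 n).count 1

open Finset

def oddBinomialSet (n : ℕ) : Finset ℕ := (range (n + 1)).filter fun k => Odd (n.choose k)

lemma mem_oddBinomialSet {n k : ℕ} : k ∈ oddBinomialSet n ↔ Odd (n.choose k) := by
  refine mem_filter.trans ⟨And.right, fun h => ⟨mem_range.2 ?_, h⟩⟩
  by_contra hk
  rw [Nat.choose_eq_zero_of_lt (by omega)] at h
  exact Nat.not_odd_zero h

lemma odd_choose_iff_le_of_lt_two {a b : ℕ} (ha : a < 2) (hb : b < 2) :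
    Odd (a.choose b) ↔ b ≤ a := by
  interval_cases a <;> interval_cases b <;> decide

lemma odd_choose_iff_mod_two_le_and_odd_choose_div_two (n k : ℕ) :
    Odd (n.choose k) ↔ k % 2 ≤ n % 2 ∧ Odd ((n / 2).choose (k / 2)) := by
  have : Fact (Nat.Prime 2) := ⟨Nat.prime_two⟩
  have lucas : n.choose k % 2 = ((n % 2).choose (k % 2) * (n / 2).choose (k / 2)) % 2 :=
    Choose.choose_modEq_choose_mod_mul_choose_div_nat
  rw [Nat.odd_iff, lucas, ← Nat.odd_iff, Nat.odd_mul,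
    odd_choose_iff_le_of_lt_two (n.mod_lt two_pos) (k.mod_lt two_pos)]

lemma card_oddBinomialSet_eq_mul (n : ℕ) :
    #(oddBinomialSet n) = #(oddBinomialSet (n / 2)) * (n % 2 + 1) := by
  rw [← card_range (n % 2 + 1), ← card_product]
  refine card_nbij' (fun k => (k / 2, k % 2)) (fun p => 2 * p.1 + p.2) ?_ ?_ ?_ ?_
  · intro k hk
    rw [mem_coe, mem_oddBinomialSet, odd_choose_iff_mod_two_le_and_odd_choose_div_two] at hk
    simp only [mem_coe, mem_product, mem_oddBinomialSet, mem_range]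
    exact ⟨hk.2, by omega⟩
  · rintro ⟨j, e⟩ hje
    simp only [mem_coe, mem_product, mem_oddBinomialSet, mem_range] at hje ⊢
    rw [odd_choose_iff_mod_two_le_and_odd_choose_div_two]
    refine ⟨by omega, ?_⟩
    rw [show (2 * j + e) / 2 = j by omega]
    exact hje.1
  · intro k _
    simp only
    omega
  · rintro ⟨j, e⟩ hje
    simp only [mem_coe, mem_product, mem_range] at hje
    ext <;> simp only <;> omega

lemma dbin_eq_mod_two_add_dbin_div_two (n : ℕ) : dbin n = n % 2 + dbin (n / 2) := by
  rcases Nat.eq_zero_or_pos n with rfl | hn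
  · rfl
  unfold dbin
  rw [Nat.digits_def' one_lt_two hn, List.count_cons]
  rcases Nat.mod_two_eq_zero_or_one n with h | h <;> simp [h, add_comm]

theorem stmt8 (n : ℕ) :
    ((Finset.range (n + 1)).filter fun k => Odd (n.choose k)).card = 2 ^ dbin n := by
  change #(oddBinomialSet n) = 2 ^ dbin n
  induction n using Nat.strong_induction_on with
  | _ n ih =>
    rcases Nat.eq_zero_or_pos n with rfl | hn
    · decide
    have two_pow_mod_two : 2 ^ (n % 2) = n % 2 + 1 := by
      rcases Nat.mod_two_eq_zero_or_one n with h | h <;> simp [h]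
    rw [card_oddBinomialSet_eq_mul, ih (n / 2) (by omega), dbin_eq_mod_two_add_dbin_div_two n,
      pow_add, two_pow_mod_two, mul_comm]
end

section
/- For a nonnegative integer m, the binomial coefficient C(2m+1, m) is odd if and only if 2m+1 = 2^q - 1 for some positive integer q. -/
/-!
By Lucas' theorem at `p = 2`, dropping the last binary digit of `2m + 1` and of `m` gives
`C(2m+1, m) ≡ C(m, ⌊m/2⌋) (mod 2)`. For `m = 2a + 1` the right side is `C(2a+1, a)`, so the claim
passes from `a` to `m`, while `m + 1 = 2(a + 1)` is a power of two exactly when `a + 1` is. For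
`m = 2a` with `a > 0` the right side is the central binomial coefficient `C(2a, a)`, which is even,
and `m + 1` is odd and larger than `1`, hence not a power of two.
-/

namespace Nat

theorem choose_two_mul_add_one_modEq_two (m : ℕ) :
    (2 * m + 1).choose m ≡ m.choose (m / 2) [MOD 2] := by
  have lucas := Choose.choose_modEq_choose_mod_mul_choose_div_nat (n := 2 * m + 1) (k := m)
    (p := 2)
  have h_one : (1 : ℕ).choose (m % 2) = 1 := by
    rcases mod_two_eq_zero_or_one m with h | h <;> simp [h]
  rwa [show (2 * m + 1) % 2 = 1 by omega, show (2 * m + 1) / 2 = m by omega, h_one,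
    one_mul] at lucas

theorem odd_choose_two_mul_add_one_iff (m : ℕ) :
    Odd ((2 * m + 1).choose m) ↔ ∃ k, m + 1 = 2 ^ k := by
  induction m using Nat.strong_induction_on with
  | _ m ih =>
  have h_reduce : Odd ((2 * m + 1).choose m) ↔ Odd (m.choose (m / 2)) := by
    rw [odd_iff, odd_iff, choose_two_mul_add_one_modEq_two m]
  obtain ⟨a, rfl | rfl⟩ := even_or_odd' m
  · rcases eq_zero_or_pos a with rfl | ha
    · exact iff_of_true (by simp) ⟨0, rfl⟩
    have h_even : Even ((2 * a).choose a) :=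
      even_iff_two_dvd.mpr (two_dvd_centralBinom_of_one_le ha)
    rw [h_reduce, mul_div_cancel_left₀ a two_ne_zero]
    refine iff_of_false (not_odd_iff_even.mpr h_even) ?_
    rintro ⟨_ | k, hk⟩
    · omega
    · rw [pow_succ] at hk
      omega
  · rw [h_reduce, show (2 * a + 1) / 2 = a by omega, ih a (by omega)]
    constructor
    · rintro ⟨k, hk⟩
      exact ⟨k + 1, by rw [pow_succ]; omega⟩
    · rintro ⟨_ | k, hk⟩
      · omega
      · exact ⟨k, by rw [pow_succ] at hk; omega⟩

end Nat

theorem stmt11 (m : ℕ) :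
    Odd ((2 * m + 1).choose m) ↔ ∃ q : ℕ, 0 < q ∧ 2 * m + 1 = 2 ^ q - 1 := by
  rw [Nat.odd_choose_two_mul_add_one_iff]
  constructor
  · rintro ⟨k, hk⟩
    exact ⟨k + 1, k.succ_pos, by rw [pow_succ]; omega⟩
  · rintro ⟨_ | k, hq, hk⟩
    · omega
    · exact ⟨k, by rw [pow_succ] at hk; omega⟩
end
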